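/- arXiv:math/0601227 — 2 statements merged into one kernel-verified Lean document; each statement's English description precedes it below -/
import Mathlib

section
/- (Brylawski's identity.) Let G be a graph with more than h edges, where h ≥ 0. Then the coefficients of its Tutte polynomial satisfy Σ_{i=0}^{h} Σ_{j=0}^{h-i} (-1)^j · C(h-i, j) · v_{i,j} = 0, where C(h-i, j) denotes the binomial coefficient. -/
open scoped Classical

noncomputable section

structure Multigraph where
  V : Type
  E : Type
  [fintypeV : Fintype V]
  [fintypeE : Fintype E]
  ends : E → Sym2 V

attribute [instance] Multigraph.fintypeV Multigraph.fintypeE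

namespace Multigraph

/-- The simple graph underlying a multigraph (loops and multiplicities dropped);
it has the same connectivity properties as the multigraph. -/
def toSimpleGraph (G : Multigraph) : SimpleGraph G.V where
  Adj v w := v ≠ w ∧ ∃ e : G.E, G.ends e = s(v, w)
  symm := ⟨by
    rintro v w ⟨hne, e, he⟩
    exact ⟨hne.symm, e, by rw [he]; exact Sym2.eq_swap⟩⟩
  loopless := ⟨fun v h => h.1 rfl⟩

/-- `p0 G` is the number of connected components of `G`. -/
def p0 (G : Multigraph) : ℕ := Nat.card G.toSimpleGraph.ConnectedComponent

/-- The number of vertices of `G`. -/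
def numV (G : Multigraph) : ℕ := Fintype.card G.V

/-- The number of edges of `G`. -/
def numE (G : Multigraph) : ℕ := Fintype.card G.E

/-- `p1 G = |E| - |V| + p0 G` is the cyclomatic number of `G`. -/
def p1 (G : Multigraph) : ℕ := G.numE + G.p0 - G.numV

/-- A multigraph is connected if it has exactly one connected component. -/
def Connected (G : Multigraph) : Prop := G.p0 = 1

/-- A loop is an edge whose two endpoints coincide. -/
def IsLoop (G : Multigraph) (e : G.E) : Prop := (G.ends e).IsDiag

/-- The spanning subgraph of `G` with edge set `S`. -/
def spanning (G : Multigraph) (S : Set G.E) : Multigraph where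
  V := G.V
  E := ↥S
  ends := fun e => G.ends e.1

/-- `G` with the edge `e` deleted. -/
def deleteEdge (G : Multigraph) (e : G.E) : Multigraph where
  V := G.V
  E := {f : G.E // f ≠ e}
  ends := fun f => G.ends f.1

/-- An isthmus is an edge whose deletion increases the number of components. -/
def IsIsthmus (G : Multigraph) (e : G.E) : Prop := G.p0 < (G.deleteEdge e).p0

/-- The setoid on vertices identifying the two endpoints of `e`. -/
def contractSetoid (G : Multigraph) (e : G.E) : Setoid G.V :=
  Relation.EqvGen.setoid fun v w => G.ends e = s(v, w)

/-- `G` with the edge `e` contracted: `e` is deleted and its endpoints identified. -/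
def contractEdge (G : Multigraph) (e : G.E) : Multigraph where
  V := Quotient (G.contractSetoid e)
  E := {f : G.E // f ≠ e}
  ends := fun f => (G.ends f.1).map (Quotient.mk (G.contractSetoid e))

/-- The rank `r(S) = |V(G)| - p0(V(G), S)` of a set of edges. -/
def rank (G : Multigraph) (S : Set G.E) : ℕ := G.numV - (G.spanning S).p0

/-- The Tutte polynomial (Whitney rank generating function)
`χ(G; x, y) = ∑_{S ⊆ E} (x-1)^(r(E)-r(S)) (y-1)^(|S|-r(S))`, as an element of
`ℤ[x][y]` (so `x = Polynomial.C Polynomial.X` and `y = Polynomial.X`). -/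
def tutte (G : Multigraph) : Polynomial (Polynomial ℤ) :=
  ∑ S : Finset G.E,
    Polynomial.C (Polynomial.X - 1) ^ (G.rank Set.univ - G.rank ↑S) *
      (Polynomial.X - Polynomial.C 1) ^ (S.card - G.rank ↑S)

/-- `tutteCoeff G i j` is the coefficient `v_{i,j}` of `x^i y^j` in the Tutte polynomial. -/
def tutteCoeff (G : Multigraph) (i j : ℕ) : ℤ := (G.tutte.coeff j).coeff i

/-- Evaluation of the Tutte polynomial at `x`, `y` in a commutative ring. -/
def tutteEval {K : Type} [CommRing K] (G : Multigraph) (x y : K) : K :=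
  Polynomial.eval₂ (Polynomial.eval₂RingHom (Int.castRingHom K) x) y G.tutte

/-- An isomorphism of multigraphs. -/
structure Iso (G H : Multigraph) where
  vEquiv : G.V ≃ H.V
  eEquiv : G.E ≃ H.E
  ends_eq : ∀ e : G.E, H.ends (eEquiv e) = (G.ends e).map vEquiv

/-- The disjoint union of two multigraphs. -/
def disjUnion (G H : Multigraph) : Multigraph where
  V := G.V ⊕ H.V
  E := G.E ⊕ H.E
  ends := fun e =>
    Sum.elim (fun e => (G.ends e).map Sum.inl) (fun e => (H.ends e).map Sum.inr) e

def joinSetoid (G H : Multigraph) (v : G.V) (w : H.V) : Setoid (G.V ⊕ H.V) :=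
  Relation.EqvGen.setoid fun a b => a = Sum.inl v ∧ b = Sum.inr w

/-- The one-vertex join `G * H`, identifying the vertex `v` of `G` with the vertex `w` of `H`. -/
def join (G H : Multigraph) (v : G.V) (w : H.V) : Multigraph where
  V := Quotient (G.joinSetoid H v w)
  E := G.E ⊕ H.E
  ends := fun e =>
    Sum.elim
      (fun e => (G.ends e).map fun a => Quotient.mk (G.joinSetoid H v w) (Sum.inl a))
      (fun e => (H.ends e).map fun a => Quotient.mk (G.joinSetoid H v w) (Sum.inr a)) e

/-- A multigraph consisting of a single loop on a single vertex. -/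
def IsSingleLoop (G : Multigraph) : Prop :=
  Fintype.card G.V = 1 ∧ Fintype.card G.E = 1 ∧ ∀ e : G.E, G.IsLoop e

/-- `G` can be expressed as a one-vertex join `G₁ * G₂` in which each factor has
more than one vertex or is a single loop. -/
def IsJoinDecomposable (G : Multigraph) : Prop :=
  ∃ (G₁ G₂ : Multigraph) (v₁ : G₁.V) (v₂ : G₂.V),
    Nonempty (Iso G (join G₁ G₂ v₁ v₂)) ∧
    (1 < Fintype.card G₁.V ∨ G₁.IsSingleLoop) ∧
    (1 < Fintype.card G₂.V ∨ G₂.IsSingleLoop)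

/-- A multigraph is 2-connected if it is connected and admits no one-vertex join
decomposition (equivalently, it is connected with no cut vertex). -/
def TwoConnected (G : Multigraph) : Prop := G.Connected ∧ ¬G.IsJoinDecomposable

end Multigraph
end

namespace Multigraph

variable (G : Multigraph)

lemma adj_deleteEdge_or (e : G.E) {a b : G.V} (h : G.toSimpleGraph.Adj a b) :
    (G.deleteEdge e).toSimpleGraph.Adj a b ∨ G.ends e = s(a, b) := by
  obtain ⟨hne, f, hf⟩ := h
  by_cases hfe : f = e
  · right; rw [← hfe]; exact hf
  · left; exact ⟨hne, ⟨f, hfe⟩, hf⟩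

lemma reachable_deleteEdge (e : G.E) {u v : G.V} (huv : G.ends e = s(u, v))
    {x y : G.V} (hxy : G.toSimpleGraph.Reachable x y) :
    (G.deleteEdge e).toSimpleGraph.Reachable x y ∨
      ((G.deleteEdge e).toSimpleGraph.Reachable x u ∧
        (G.deleteEdge e).toSimpleGraph.Reachable v y) ∨
      ((G.deleteEdge e).toSimpleGraph.Reachable x v ∧
        (G.deleteEdge e).toSimpleGraph.Reachable u y) := by
  set H := (G.deleteEdge e).toSimpleGraph with hH
  obtain ⟨w⟩ := hxy
  induction w with
  | nil => exact Or.inl (SimpleGraph.Reachable.refl _)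
  | @cons a b c hab w ih =>
    rcases G.adj_deleteEdge_or e hab with hab' | hab'
    · have hRab : H.Reachable a b := hab'.reachable
      rcases ih with h | ⟨h1, h2⟩ | ⟨h1, h2⟩
      · exact Or.inl (hRab.trans h)
      · exact Or.inr (Or.inl ⟨hRab.trans h1, h2⟩)
      · exact Or.inr (Or.inr ⟨hRab.trans h1, h2⟩)
    · rw [huv, Sym2.eq_iff] at hab'
      rcases hab' with ⟨ha, hb⟩ | ⟨ha, hb⟩
      · subst ha; subst hb
        rcases ih with h | ⟨h1, h2⟩ | ⟨h1, h2⟩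
        · exact Or.inr (Or.inl ⟨SimpleGraph.Reachable.refl _, h⟩)
        · exact Or.inl (h1.symm.trans h2)
        · exact Or.inl h2
      · subst ha; subst hb
        rcases ih with h | ⟨h1, h2⟩ | ⟨h1, h2⟩
        · exact Or.inr (Or.inr ⟨SimpleGraph.Reachable.refl _, h⟩)
        · exact Or.inl h2
        · exact Or.inl (h1.symm.trans h2)

end Multigraph
namespace Multigraph

variable (G : Multigraph)

instance (G : Multigraph) : Finite G.toSimpleGraph.ConnectedComponent :=
  Quot.finite _

lemma deleteEdge_le (e : G.E) :
    (G.deleteEdge e).toSimpleGraph ≤ G.toSimpleGraph := by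
  rintro a b ⟨hne, ⟨f, hf⟩, hf2⟩
  exact ⟨hne, f, hf2⟩

lemma p0_deleteEdge_le (e : G.E) : (G.deleteEdge e).p0 ≤ G.p0 + 1 := by
  obtain ⟨u, v, huv⟩ : ∃ u v, G.ends e = s(u, v) :=
    Sym2.ind (fun u v => ⟨u, v, rfl⟩) (G.ends e)
  set H := (G.deleteEdge e).toSimpleGraph with hH
  let φ : H.ConnectedComponent → G.toSimpleGraph.ConnectedComponent :=
    SimpleGraph.ConnectedComponent.map
      (SimpleGraph.Hom.ofLE (G.deleteEdge_le e))
  let g : H.ConnectedComponent → G.toSimpleGraph.ConnectedComponent ⊕ Unit :=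
    fun c => if c = H.connectedComponentMk v then Sum.inr () else Sum.inl (φ c)
  have hginj : Function.Injective g := by
    intro c1 c2 hg
    obtain ⟨x, rfl⟩ := c1.exists_rep
    obtain ⟨y, rfl⟩ := c2.exists_rep
    simp only [g] at hg
    by_cases h1 : (Quot.mk H.Reachable x : H.ConnectedComponent) = H.connectedComponentMk v <;>
      by_cases h2 : (Quot.mk H.Reachable y : H.ConnectedComponent) = H.connectedComponentMk v
    · rw [h1, h2]
    · erw [if_pos h1, if_neg h2] at hg; exact absurd hg (by simp)
    · erw [if_neg h1, if_pos h2] at hg; exact absurd hg (by simp)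
    · erw [if_neg h1, if_neg h2] at hg
      simp only [Sum.inl.injEq] at hg
      have hxy : G.toSimpleGraph.Reachable x y := by
        have := hg
        simp only [φ, SimpleGraph.ConnectedComponent.map_mk] at this
        exact SimpleGraph.ConnectedComponent.eq.mp this
      rcases G.reachable_deleteEdge e huv hxy with h | ⟨ha, hb⟩ | ⟨ha, hb⟩
      · exact SimpleGraph.ConnectedComponent.eq.mpr h
      · exact absurd (SimpleGraph.ConnectedComponent.eq.mpr hb.symm) h2
      · exact absurd (SimpleGraph.ConnectedComponent.eq.mpr ha) h1
  calc (G.deleteEdge e).p0 ≤ Nat.card (G.toSimpleGraph.ConnectedComponent ⊕ Unit) :=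
        Nat.card_le_card_of_injective g hginj
    _ = G.p0 + 1 := by rw [Nat.card_sum]; simp [p0]

lemma numE_deleteEdge (e : G.E) : (G.deleteEdge e).numE = G.numE - 1 := by
  simp only [numE, deleteEdge]
  refine (Fintype.card_subtype_compl (p := fun f => f = e)).trans ?_
  simp

lemma p0_eq_numV_of_card_eq_zero (h : Fintype.card G.E = 0) : G.p0 = G.numV := by
  have hE : IsEmpty G.E := Fintype.card_eq_zero_iff.mp h
  have hbot : G.toSimpleGraph = ⊥ := by
    ext a b
    simp only [toSimpleGraph, SimpleGraph.bot_adj, iff_false]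
    rintro ⟨hne, f, hf⟩
    exact hE.elim f
  have : Function.Bijective (G.toSimpleGraph.connectedComponentMk) := by
    constructor
    · intro a b hab
      have := SimpleGraph.ConnectedComponent.eq.mp hab
      rw [hbot] at this
      exact SimpleGraph.reachable_bot.mp this
    · intro c; exact c.exists_rep
  rw [p0, numV, ← Nat.card_eq_fintype_card]
  exact (Nat.card_eq_of_bijective _ this).symm

lemma numV_le_numE_add_p0_aux : ∀ (n : ℕ) (G : Multigraph), G.numE = n →
    G.numV ≤ G.numE + G.p0 := by
  intro n
  induction n with
  | zero => intro G hG; rw [G.p0_eq_numV_of_card_eq_zero hG]; exact Nat.le_add_left _ _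
  | succ n ih =>
    intro G hG
    have hpos : 0 < Fintype.card G.E := by
      have h' := hG; simp only [numE] at h'; omega
    obtain ⟨e⟩ := Fintype.card_pos_iff.mp hpos
    have h1 : (G.deleteEdge e).numE = n := by simp [numE_deleteEdge, hG]
    have h2 := ih (G.deleteEdge e) h1
    have h3 := G.p0_deleteEdge_le e
    have h4 : (G.deleteEdge e).numV = G.numV := rfl
    omega

lemma numV_le_numE_add_p0 : G.numV ≤ G.numE + G.p0 :=
  numV_le_numE_add_p0_aux G.numE G rfl

lemma spanning_le (S : Set G.E) :
    (G.spanning S).toSimpleGraph ≤ (G.spanning Set.univ).toSimpleGraph := by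
  rintro a b ⟨hne, ⟨f, hf⟩, hf2⟩
  exact ⟨hne, ⟨f, trivial⟩, hf2⟩

lemma p0_spanning_univ_le (S : Set G.E) :
    (G.spanning Set.univ).p0 ≤ (G.spanning S).p0 := by
  apply Nat.card_le_card_of_surjective
    (SimpleGraph.ConnectedComponent.map
      (SimpleGraph.Hom.ofLE (G.spanning_le S)))
  intro c
  obtain ⟨x, rfl⟩ := c.exists_rep
  exact ⟨(G.spanning S).toSimpleGraph.connectedComponentMk x, rfl⟩

lemma rank_le_rank_univ (S : Set G.E) : G.rank S ≤ G.rank Set.univ :=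
  Nat.sub_le_sub_left (G.p0_spanning_univ_le S) _

lemma rank_le_card (S : Finset G.E) : G.rank ↑S ≤ S.card := by
  have h := (G.spanning ↑S).numV_le_numE_add_p0
  have hV : (G.spanning ↑S).numV = G.numV := rfl
  have hE : (G.spanning ↑S).numE = S.card := by
    simp only [numE, spanning]
    simp
    rw [← Fintype.card_coe S]
    exact @Fintype.card_congr _ _ (G.spanning ↑S).fintypeE (Finset.Subtype.fintype S) (Equiv.refl _)
  rw [hV, hE] at h
  rw [rank]
  omega

end Multigraph
section PowerSeriesAux

open PowerSeries

/-- The unit `1 - X` of `ℤ⟦X⟧`. -/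
noncomputable def psU : (PowerSeries ℤ)ˣ := (PowerSeries.invOneSubPow ℤ 1)⁻¹

lemma psU_val : (psU : PowerSeries ℤ) = 1 - PowerSeries.X := by
  have h : (psU : PowerSeries ℤ) = (PowerSeries.invOneSubPow ℤ 1).inv := rfl
  rw [h, PowerSeries.invOneSubPow_inv_eq_one_sub_pow, pow_one]

lemma psU_inv_pow (j : ℕ) :
    (psU⁻¹ ^ (j + 1) : (PowerSeries ℤ)ˣ) = PowerSeries.invOneSubPow ℤ (j + 1) := by
  rw [psU, inv_inv]
  rw [PowerSeries.invOneSubPow_eq_inv_one_sub_pow (S := ℤ) (d := j + 1),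
    PowerSeries.invOneSubPow_eq_inv_one_sub_pow (S := ℤ) (d := 1), pow_one]

lemma coeff_psU_inv (j n : ℕ) :
    PowerSeries.coeff (R := ℤ) n ((psU⁻¹ ^ (j + 1) : (PowerSeries ℤ)ˣ) : PowerSeries ℤ) =
      (Nat.choose (j + n) j : ℤ) := by
  rw [psU_inv_pow, PowerSeries.invOneSubPow_val_succ_eq_mk_add_choose, PowerSeries.coeff_mk]

/-- Evaluation `ℤ[x] → ℤ⟦z⟧`, `x ↦ z`. -/
noncomputable def psInner : Polynomial ℤ →+* PowerSeries ℤ :=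
  Polynomial.eval₂RingHom (Int.castRingHom (PowerSeries ℤ)) PowerSeries.X

/-- The point `y ↦ -z/(1-z)`. -/
noncomputable def psT : PowerSeries ℤ := -(PowerSeries.X * ((psU⁻¹ : (PowerSeries ℤ)ˣ) : PowerSeries ℤ))

/-- Evaluation `ℤ[x][y] → ℤ⟦z⟧`, `x ↦ z`, `y ↦ -z/(1-z)`. -/
noncomputable def psTheta : Polynomial (Polynomial ℤ) →+* PowerSeries ℤ :=
  Polynomial.eval₂RingHom psInner psT

lemma psT_sub_one : psT - 1 = -((psU⁻¹ : (PowerSeries ℤ)ˣ) : PowerSeries ℤ) := by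
  have h1 : (1 : PowerSeries ℤ) = (psU : PowerSeries ℤ) * ((psU⁻¹ : (PowerSeries ℤ)ˣ) : PowerSeries ℤ) := by
    rw [← Units.val_mul, mul_inv_cancel, Units.val_one]
  rw [psT]
  nth_rewrite 1 [h1]
  rw [psU_val]
  ring

lemma coeff_psMono (h i j : ℕ) (c : ℤ) :
    PowerSeries.coeff (R := ℤ) h (((psU⁻¹ : (PowerSeries ℤ)ˣ) : PowerSeries ℤ) *
        psTheta (Polynomial.monomial j (Polynomial.monomial i c))) =
      if i + j ≤ h then c * ((-1) ^ j * (Nat.choose (h - i) j : ℤ)) else 0 := by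
  have h1 : psTheta (Polynomial.monomial j (Polynomial.monomial i c)) =
      psInner (Polynomial.monomial i c) * psT ^ j := by
    simp [psTheta, Polynomial.eval₂_monomial]
  have h2 : psInner (Polynomial.monomial i c) =
      PowerSeries.C (R := ℤ) c * PowerSeries.X ^ i := by
    simp only [psInner, Polynomial.coe_eval₂RingHom, Polynomial.eval₂_monomial]
    congr 1
    rw [eq_intCast, ← map_intCast (PowerSeries.C (R := ℤ)) c, Int.cast_id]
  have h3 : ((psU⁻¹ : (PowerSeries ℤ)ˣ) : PowerSeries ℤ) *
      (psInner (Polynomial.monomial i c) * psT ^ j) =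
      PowerSeries.C (R := ℤ) (c * (-1) ^ j) *
        (PowerSeries.X ^ (i + j) * ((psU⁻¹ ^ (j + 1) : (PowerSeries ℤ)ˣ) : PowerSeries ℤ)) := by
    rw [h2, psT, neg_pow, mul_pow, Units.val_pow_eq_pow_val, map_mul, map_pow,
      map_neg, map_one, pow_succ, pow_add]
    ring
  rw [h1, h3, PowerSeries.coeff_C_mul]
  by_cases hle : i + j ≤ h
  · rw [if_pos hle]
    rw [PowerSeries.coeff_X_pow_mul', if_pos hle, coeff_psU_inv]
    have : j + (h - (i + j)) = h - i := by omega
    rw [this]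
    ring
  · rw [if_neg hle]
    have hdvd : (PowerSeries.X : PowerSeries ℤ) ^ (i + j) ∣
        PowerSeries.X ^ (i + j) * ((psU⁻¹ ^ (j + 1) : (PowerSeries ℤ)ˣ) : PowerSeries ℤ) :=
      Dvd.intro _ rfl
    rw [PowerSeries.X_pow_dvd_iff.mp hdvd h (by omega), mul_zero]

end PowerSeriesAux
section PowerSeriesAux2

lemma coeff_psKey (h : ℕ) (f : Polynomial (Polynomial ℤ)) :
    PowerSeries.coeff (R := ℤ) h (((psU⁻¹ : (PowerSeries ℤ)ˣ) : PowerSeries ℤ) * psTheta f) =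
      ∑ i ∈ Finset.range (h + 1), ∑ j ∈ Finset.range (h - i + 1),
        ((f.coeff j).coeff i) * ((-1) ^ j * (Nat.choose (h - i) j : ℤ)) := by
  induction f using Polynomial.induction_on' with
  | add p q hp hq =>
      simp only [map_add, mul_add, hp, hq, Polynomial.coeff_add, add_mul,
        Finset.sum_add_distrib]
  | monomial j a =>
      induction a using Polynomial.induction_on' with
      | add p q hp hq =>
          rw [map_add (Polynomial.monomial j)]
          simp only [map_add, mul_add, hp, hq, Polynomial.coeff_add, add_mul,
            Finset.sum_add_distrib]
      | monomial i c =>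
          rw [coeff_psMono]
          by_cases hc : i + j ≤ h
          · rw [if_pos hc]
            have e1 : ∀ b ∈ Finset.range (h + 1), b ≠ i →
                (∑ j' ∈ Finset.range (h - b + 1),
                  (((Polynomial.monomial j (Polynomial.monomial i c)).coeff j').coeff b) *
                    ((-1) ^ j' * (Nat.choose (h - b) j' : ℤ))) = 0 := by
              intro b _ hb
              apply Finset.sum_eq_zero
              intro j' _
              simp [Polynomial.coeff_monomial,
                apply_ite (fun p : Polynomial ℤ => p.coeff b), Ne.symm hb]
            rw [Finset.sum_eq_single i e1
              (fun hi => absurd (Finset.mem_range.mpr (by omega)) hi)]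
            have e2 : ∀ b ∈ Finset.range (h - i + 1), b ≠ j →
                (((Polynomial.monomial j (Polynomial.monomial i c)).coeff b).coeff i) *
                  ((-1) ^ b * (Nat.choose (h - i) b : ℤ)) = 0 := by
              intro b _ hb
              simp [Polynomial.coeff_monomial, Ne.symm hb]
            rw [Finset.sum_eq_single j e2
              (fun hj => absurd (Finset.mem_range.mpr (by omega)) hj)]
            simp [Polynomial.coeff_monomial]
          · rw [if_neg hc]
            symm
            apply Finset.sum_eq_zero
            intro i' hi'
            apply Finset.sum_eq_zero
            intro j' hj'
            rw [Finset.mem_range] at hi' hj'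
            rcases eq_or_ne j j' with rfl | hj
            · rcases eq_or_ne i i' with rfl | hi2
              · exact absurd (by omega : i + j ≤ h) hc
              · simp [Polynomial.coeff_monomial,
                  apply_ite (fun p : Polynomial ℤ => p.coeff i'), hi2]
            · simp [Polynomial.coeff_monomial, hj]

lemma sum_pow_card {R : Type*} [CommRing R] (E : Type*) [Fintype E] (x : R) :
    ∑ S : Finset E, x ^ S.card = (x + 1) ^ Fintype.card E := by
  classical
  have h := Finset.prod_add (fun _ : E => x) (fun _ => 1) Finset.univ
  simp only [Finset.prod_const, Finset.powerset_univ, one_pow, mul_one,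
    Finset.card_univ] at h
  exact h.symm

end PowerSeriesAux2
namespace Multigraph

lemma step1 (G : Multigraph) (S : Finset G.E) :
    ((psU⁻¹ : (PowerSeries ℤ)ˣ) : PowerSeries ℤ) * psTheta
        (Polynomial.C (Polynomial.X - 1) ^ (G.rank Set.univ - G.rank ↑S) *
          (Polynomial.X - Polynomial.C 1) ^ (S.card - G.rank ↑S)) =
      (-1) ^ (G.rank Set.univ + S.card) *
        ((psU ^ ((G.rank Set.univ : ℤ) - 1) * (psU⁻¹) ^ S.card :
          (PowerSeries ℤ)ˣ) : PowerSeries ℤ) := by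
  set r := G.rank Set.univ with hr
  set k := S.card with hk
  set s := G.rank (↑S : Set G.E) with hs
  have ha : s ≤ r := G.rank_le_rank_univ _
  have hb : s ≤ k := G.rank_le_card _
  set a := r - s with hA
  set b := k - s with hB
  have h1 : psTheta (Polynomial.C (Polynomial.X - 1) ^ a *
      (Polynomial.X - Polynomial.C 1) ^ b) =
      (-((psU : (PowerSeries ℤ)ˣ) : PowerSeries ℤ)) ^ a *
        (-((psU⁻¹ : (PowerSeries ℤ)ˣ) : PowerSeries ℤ)) ^ b := by
    rw [map_mul, map_pow, map_pow]
    congr 2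
    · show Polynomial.eval₂ psInner psT _ = _
      rw [Polynomial.eval₂_C]
      show Polynomial.eval₂ _ _ _ = _
      rw [Polynomial.eval₂_sub, Polynomial.eval₂_X, Polynomial.eval₂_one, psU_val]
      ring
    · show Polynomial.eval₂ psInner psT _ = _
      rw [Polynomial.eval₂_sub, Polynomial.eval₂_X, Polynomial.eval₂_C, map_one]
      rw [← psT_sub_one]
  rw [h1]
  have h2 : ((psU⁻¹ : (PowerSeries ℤ)ˣ) : PowerSeries ℤ) *
      ((-((psU : (PowerSeries ℤ)ˣ) : PowerSeries ℤ)) ^ a *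
        (-((psU⁻¹ : (PowerSeries ℤ)ˣ) : PowerSeries ℤ)) ^ b) =
      (-1) ^ (a + b) *
        ((psU⁻¹ * psU ^ a * psU⁻¹ ^ b : (PowerSeries ℤ)ˣ) : PowerSeries ℤ) := by
    rw [neg_pow ((psU : (PowerSeries ℤ)ˣ) : PowerSeries ℤ) a,
      neg_pow ((psU⁻¹ : (PowerSeries ℤ)ˣ) : PowerSeries ℤ) b,
      Units.val_mul, Units.val_mul, Units.val_pow_eq_pow_val, Units.val_pow_eq_pow_val,
      pow_add]
    ring
  rw [h2]
  have h3 : (psU⁻¹ * psU ^ a * psU⁻¹ ^ b : (PowerSeries ℤ)ˣ) =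
      psU ^ ((r : ℤ) - 1) * psU⁻¹ ^ k := by
    have hexp : ((a : ℤ)) - b - 1 = ((r : ℤ) - 1) + (-(k : ℤ)) := by
      rw [hA, hB]
      push_cast [Nat.cast_sub ha, Nat.cast_sub hb]
      ring
    calc psU⁻¹ * psU ^ a * psU⁻¹ ^ b = psU ^ (((a : ℤ)) - b - 1) := by
          group
      _ = psU ^ ((r : ℤ) - 1) * psU⁻¹ ^ k := by
          rw [hexp, zpow_add, zpow_neg, zpow_natCast, inv_pow]
  rw [h3]
  have h4 : (-1 : PowerSeries ℤ) ^ (r + k) = (-1) ^ (a + b) := by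
    have : r + k = (a + b) + 2 * s := by omega
    rw [this, pow_add, pow_mul, neg_one_sq, one_pow, mul_one]
  rw [h4]

lemma theta_tutte (G : Multigraph) :
    ((psU⁻¹ : (PowerSeries ℤ)ˣ) : PowerSeries ℤ) * psTheta G.tutte =
      (-1) ^ (G.rank Set.univ + G.numE) * PowerSeries.X ^ G.numE *
        ((psU ^ ((G.rank Set.univ : ℤ) - (G.numE : ℤ) - 1) :
          (PowerSeries ℤ)ˣ) : PowerSeries ℤ) := by
  set r := G.rank Set.univ with hr
  rw [tutte, map_sum, Finset.mul_sum]
  rw [Finset.sum_congr rfl (fun S _ => G.step1 S)]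
  have h5 : ∀ S : Finset G.E,
      ((-1 : PowerSeries ℤ)) ^ (r + S.card) *
        ((psU ^ ((r : ℤ) - 1) * psU⁻¹ ^ S.card : (PowerSeries ℤ)ˣ) : PowerSeries ℤ) =
      ((-1) ^ r * ((psU ^ ((r : ℤ) - 1) : (PowerSeries ℤ)ˣ) : PowerSeries ℤ)) *
        (-((psU⁻¹ : (PowerSeries ℤ)ˣ) : PowerSeries ℤ)) ^ S.card := by
    intro S
    rw [neg_pow ((psU⁻¹ : (PowerSeries ℤ)ˣ) : PowerSeries ℤ) S.card,
      Units.val_mul, Units.val_pow_eq_pow_val, pow_add]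
    ring
  rw [Finset.sum_congr rfl (fun S _ => h5 S), ← Finset.mul_sum]
  rw [sum_pow_card G.E (-((psU⁻¹ : (PowerSeries ℤ)ˣ) : PowerSeries ℤ))]
  have h6 : (-((psU⁻¹ : (PowerSeries ℤ)ˣ) : PowerSeries ℤ) + 1) = psT := by
    have := psT_sub_one
    linear_combination -this
  rw [h6, psT,
    neg_pow (PowerSeries.X * ((psU⁻¹ : (PowerSeries ℤ)ˣ) : PowerSeries ℤ))
      (Fintype.card G.E), mul_pow]
  have h7 : ((psU⁻¹ : (PowerSeries ℤ)ˣ) : PowerSeries ℤ) ^ G.numE =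
      ((psU⁻¹ ^ G.numE : (PowerSeries ℤ)ˣ) : PowerSeries ℤ) := by
    rw [Units.val_pow_eq_pow_val]
  have h8 : (psU ^ ((r : ℤ) - 1) * psU⁻¹ ^ G.numE : (PowerSeries ℤ)ˣ) =
      psU ^ ((r : ℤ) - (G.numE : ℤ) - 1) := by
    group
  have h9 : ((psU ^ ((r : ℤ) - 1) : (PowerSeries ℤ)ˣ) : PowerSeries ℤ) *
      ((psU⁻¹ ^ G.numE : (PowerSeries ℤ)ˣ) : PowerSeries ℤ) =
      ((psU ^ ((r : ℤ) - (G.numE : ℤ) - 1) : (PowerSeries ℤ)ˣ) : PowerSeries ℤ) := by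
    rw [← Units.val_mul, h8]
  have hm : Fintype.card G.E = G.numE := rfl
  rw [hm, h7, pow_add]
  linear_combination ((-1 : PowerSeries ℤ) ^ r * (-1) ^ G.numE *
    PowerSeries.X ^ G.numE) * h9
end Multigraph

namespace Multigraph

/-- Brylawski's identity: for a graph with more than `h` edges,
`∑_{i=0}^{h} ∑_{j=0}^{h-i} (-1)^j C(h-i, j) v_{i,j} = 0`. -/
theorem brylawski_identity (G : Multigraph) (h : ℕ) (hE : h < Fintype.card G.E) :
    ∑ i ∈ Finset.range (h + 1), ∑ j ∈ Finset.range (h - i + 1),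
      (-1 : ℤ) ^ j * (Nat.choose (h - i) j : ℤ) * G.tutteCoeff i j = 0 := by
  have h0 : PowerSeries.coeff (R := ℤ) h
      (((psU⁻¹ : (PowerSeries ℤ)ˣ) : PowerSeries ℤ) * psTheta G.tutte) = 0 := by
    rw [theta_tutte G]
    have hdvd : (PowerSeries.X : PowerSeries ℤ) ^ G.numE ∣
        (-1) ^ (G.rank Set.univ + G.numE) * PowerSeries.X ^ G.numE *
          ((psU ^ ((G.rank Set.univ : ℤ) - (G.numE : ℤ) - 1) :
            (PowerSeries ℤ)ˣ) : PowerSeries ℤ) :=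
      ⟨(-1) ^ (G.rank Set.univ + G.numE) *
        ((psU ^ ((G.rank Set.univ : ℤ) - (G.numE : ℤ) - 1) :
          (PowerSeries ℤ)ˣ) : PowerSeries ℤ), by ring⟩
    exact PowerSeries.X_pow_dvd_iff.mp hdvd h hE
  calc ∑ i ∈ Finset.range (h + 1), ∑ j ∈ Finset.range (h - i + 1),
        (-1 : ℤ) ^ j * (Nat.choose (h - i) j : ℤ) * G.tutteCoeff i j
      = ∑ i ∈ Finset.range (h + 1), ∑ j ∈ Finset.range (h - i + 1),
        ((G.tutte.coeff j).coeff i) * ((-1) ^ j * (Nat.choose (h - i) j : ℤ)) := by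
        apply Finset.sum_congr rfl
        intro i _
        apply Finset.sum_congr rfl
        intro j _
        simp only [tutteCoeff]
        ring
    _ = PowerSeries.coeff (R := ℤ) h
        (((psU⁻¹ : (PowerSeries ℤ)ˣ) : PowerSeries ℤ) * psTheta G.tutte) :=
        (coeff_psKey h G.tutte).symm
    _ = 0 := h0

end Multigraph
end

section
/- Let G be a connected graph, let p be the number of loops of G, let s be the number of isthmuses of G, let p1(G) be its cyclomatic number, and let d(G) = |V(G)| - 1 (the number of edges of any spanning tree of G). Then the Tutte coefficients satisfy: (1) v_{d(G), p} = 1, and v_{i,j} = 0 whenever i > d(G); (2) v_{s, p1(G)} = 1, and v_{i,j} = 0 whenever j > p1(G). -/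
open scoped Classical

noncomputable section

section Graph
open SimpleGraph
variable {V : Type} [Fintype V]

lemma cc_surj {H H' : SimpleGraph V} (h : H ≤ H') :
    Function.Surjective (ConnectedComponent.map (SimpleGraph.Hom.ofLE h)) := by
  intro c
  induction c using SimpleGraph.ConnectedComponent.ind with
  | _ v => exact ⟨H.connectedComponentMk v, rfl⟩

lemma ncc_le_of_le {H H' : SimpleGraph V} (h : H ≤ H') :
    Nat.card H'.ConnectedComponent ≤ Nat.card H.ConnectedComponent :=
  Nat.card_le_card_of_surjective _ (cc_surj h)

lemma reach_sup_edge {H : SimpleGraph V} {u v a b : V}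
    (h : (H ⊔ SimpleGraph.fromEdgeSet {s(u,v)}).Reachable a b) :
    H.Reachable a b ∨ (H.Reachable a u ∧ H.Reachable v b) ∨
      (H.Reachable a v ∧ H.Reachable u b) := by
  obtain ⟨w⟩ := h
  induction w with
  | nil => exact Or.inl (Reachable.refl _)
  | @cons a c b hadj w ih =>
      rcases hadj with hH | hE
      · rcases ih with h1 | ⟨h1, h2⟩ | ⟨h1, h2⟩
        · exact Or.inl ((Adj.reachable hH).trans h1)
        · exact Or.inr (Or.inl ⟨(Adj.reachable hH).trans h1, h2⟩)
        · exact Or.inr (Or.inr ⟨(Adj.reachable hH).trans h1, h2⟩)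
      · rw [SimpleGraph.fromEdgeSet_adj] at hE
        obtain ⟨hmem, hne⟩ := hE
        rw [Set.mem_singleton_iff, Sym2.eq_iff] at hmem
        rcases hmem with ⟨rfl, rfl⟩ | ⟨rfl, rfl⟩
        · rcases ih with h1 | ⟨h1, h2⟩ | ⟨h1, h2⟩
          · exact Or.inr (Or.inl ⟨Reachable.refl _, h1⟩)
          · exact Or.inl (h1.symm.trans h2)
          · exact Or.inl h2
        · rcases ih with h1 | ⟨h1, h2⟩ | ⟨h1, h2⟩
          · exact Or.inr (Or.inr ⟨Reachable.refl _, h1⟩)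
          · exact Or.inl h2
          · exact Or.inl (h1.symm.trans h2)

set_option linter.unusedSectionVars false

lemma ncc_sup_edge_eq {H : SimpleGraph V} {u v : V} (hr : u = v ∨ H.Reachable u v) :
    Nat.card (H ⊔ SimpleGraph.fromEdgeSet {s(u,v)}).ConnectedComponent
      = Nat.card H.ConnectedComponent := by
  rcases hr with rfl | hr
  · have : SimpleGraph.fromEdgeSet {s(u,u)} = (⊥ : SimpleGraph V) := by
      ext a b
      simp only [SimpleGraph.fromEdgeSet_adj, Set.mem_singleton_iff, Sym2.eq_iff,
        SimpleGraph.bot_adj, iff_false, not_and]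
      rintro (⟨rfl, rfl⟩ | ⟨rfl, rfl⟩) <;> simp
    rw [this, sup_bot_eq]
  · have hle : H ≤ H ⊔ SimpleGraph.fromEdgeSet {s(u,v)} := le_sup_left
    refine (Nat.card_eq_of_bijective _ ⟨?_, cc_surj hle⟩).symm
    refine SimpleGraph.ConnectedComponent.ind₂ (fun a b h => ?_)
    rw [SimpleGraph.ConnectedComponent.map_mk, SimpleGraph.ConnectedComponent.map_mk,
      SimpleGraph.ConnectedComponent.eq] at h
    refine SimpleGraph.ConnectedComponent.eq.mpr ?_
    rcases reach_sup_edge h with h1 | ⟨h1, h2⟩ | ⟨h1, h2⟩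
    · exact h1
    · exact (h1.trans hr).trans h2
    · exact (h1.trans hr.symm).trans h2

lemma ncc_sup_edge_add_one {H : SimpleGraph V} {u v : V} (hne : u ≠ v)
    (hr : ¬ H.Reachable u v) :
    Nat.card H.ConnectedComponent
      = Nat.card (H ⊔ SimpleGraph.fromEdgeSet {s(u,v)}).ConnectedComponent + 1 := by
  set H' := H ⊔ SimpleGraph.fromEdgeSet {s(u,v)} with hH'
  have hle : H ≤ H' := le_sup_left
  set f := SimpleGraph.ConnectedComponent.map (SimpleGraph.Hom.ofLE hle) with hf
  have hfmk : ∀ a, f (H.connectedComponentMk a) = H'.connectedComponentMk a := fun a => rfl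
  have huv' : H'.Reachable u v := by
    refine SimpleGraph.Adj.reachable (Or.inr ?_)
    simp [SimpleGraph.fromEdgeSet_adj, hne]
  have hbij : Function.Bijective
      (fun c : {c : H.ConnectedComponent // c ≠ H.connectedComponentMk v} => f c.1) := by
    constructor
    · rintro ⟨c, hc⟩ ⟨d, hd⟩ h
      obtain ⟨a, ha⟩ := Quot.exists_rep c
      obtain ⟨b, hb⟩ := Quot.exists_rep d
      subst ha hb
      simp only [hfmk] at h
      have h' := SimpleGraph.ConnectedComponent.eq.mp h
      rcases reach_sup_edge h' with h1 | ⟨h1, h2⟩ | ⟨h1, h2⟩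
      · exact Subtype.ext (SimpleGraph.ConnectedComponent.eq.mpr h1)
      · exact absurd (SimpleGraph.ConnectedComponent.eq.mpr h2.symm) hd
      · exact absurd (SimpleGraph.ConnectedComponent.eq.mpr h1) hc
    · intro d
      obtain ⟨x, hx⟩ := Quot.exists_rep d
      by_cases hxv : H.Reachable x v
      · refine ⟨⟨H.connectedComponentMk u, fun hcontra => ?_⟩, ?_⟩
        · exact hr (SimpleGraph.ConnectedComponent.eq.mp hcontra)
        · show f (H.connectedComponentMk u) = d
          rw [hfmk, ← hx]
          exact SimpleGraph.ConnectedComponent.eq.mpr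
            (huv'.trans ((hxv.mono hle).symm))
      · refine ⟨⟨H.connectedComponentMk x, fun hcontra => ?_⟩, ?_⟩
        · exact hxv (SimpleGraph.ConnectedComponent.eq.mp hcontra)
        · show f (H.connectedComponentMk x) = d
          rw [hfmk, ← hx]
          rfl
  have hcard := Nat.card_eq_of_bijective _ hbij
  letI : Fintype H.ConnectedComponent := Fintype.ofFinite _
  letI : Fintype H'.ConnectedComponent := Fintype.ofFinite _
  rw [Nat.card_eq_fintype_card, Nat.card_eq_fintype_card] at hcard
  rw [Nat.card_eq_fintype_card, Nat.card_eq_fintype_card]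
  simp only [ne_eq] at hcard
  rw [Fintype.card_subtype_compl] at hcard
  have h1 : Fintype.card {c : H.ConnectedComponent // c = H.connectedComponentMk v} = 1 :=
    Fintype.card_subtype_eq _
  have h2 : 0 < Fintype.card H.ConnectedComponent := Fintype.card_pos_iff.mpr ⟨H.connectedComponentMk v⟩
  omega

lemma ncc_bot : Nat.card (⊥ : SimpleGraph V).ConnectedComponent = Fintype.card V := by
  rw [← Nat.card_eq_fintype_card]
  refine (Nat.card_eq_of_bijective ((⊥ : SimpleGraph V).connectedComponentMk) ⟨?_, ?_⟩).symm
  · intro a b h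
    exact SimpleGraph.reachable_bot.mp (SimpleGraph.ConnectedComponent.eq.mp h)
  · intro c
    obtain ⟨x, hx⟩ := Quot.exists_rep c
    exact ⟨x, hx⟩

lemma ncc_le_card (H : SimpleGraph V) :
    Nat.card H.ConnectedComponent ≤ Fintype.card V := by
  rw [← Nat.card_eq_fintype_card]
  exact Nat.card_le_card_of_surjective H.connectedComponentMk
    (fun c => Quot.exists_rep c)

lemma ncc_lt_of_adj {H : SimpleGraph V} {a b : V} (h : H.Adj a b) :
    Nat.card H.ConnectedComponent < Fintype.card V := by
  letI : Fintype H.ConnectedComponent := Fintype.ofFinite _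
  rw [Nat.card_eq_fintype_card]
  refine Fintype.card_lt_of_surjective_not_injective H.connectedComponentMk
    (fun c => Quot.exists_rep c) (fun hinj => ?_)
  exact h.ne (hinj (SimpleGraph.ConnectedComponent.eq.mpr h.reachable))

lemma ncc_pos (H : SimpleGraph V) [Nonempty V] :
    0 < Nat.card H.ConnectedComponent := by
  have : Nonempty H.ConnectedComponent := ⟨H.connectedComponentMk (Classical.arbitrary V)⟩
  exact Nat.card_pos

end Graph

lemma Sym2.exists_eq_mk {α : Type*} (z : Sym2 α) : ∃ u v, z = s(u, v) :=
  Sym2.inductionOn z fun u v => ⟨u, v, rfl⟩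

namespace Multigraph

variable {G : Multigraph}

def sg (G : Multigraph) (S : Set G.E) : SimpleGraph G.V where
  Adj v w := v ≠ w ∧ ∃ e ∈ S, G.ends e = s(v, w)
  symm := ⟨by
    rintro v w ⟨hne, e, heS, he⟩
    exact ⟨hne.symm, e, heS, by rw [he]; exact Sym2.eq_swap⟩⟩
  loopless := ⟨fun v h => h.1 rfl⟩

lemma sg_adj {S : Set G.E} {v w : G.V} :
    (G.sg S).Adj v w ↔ v ≠ w ∧ ∃ e ∈ S, G.ends e = s(v, w) := Iff.rfl

lemma toSimpleGraph_spanning (S : Set G.E) : (G.spanning S).toSimpleGraph = G.sg S := by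
  ext v w
  constructor
  · rintro ⟨h, e, he⟩; exact ⟨h, e.1, e.2, he⟩
  · rintro ⟨h, e, heS, he⟩; exact ⟨h, ⟨e, heS⟩, he⟩

lemma p0_spanning (S : Set G.E) :
    (G.spanning S).p0 = Nat.card (G.sg S).ConnectedComponent := by
  unfold p0
  rw [toSimpleGraph_spanning]
  rfl

noncomputable def cN (G : Multigraph) (S : Finset G.E) : ℕ := Nat.card (G.sg ↑S).ConnectedComponent

lemma p0_spanning_coe (S : Finset G.E) : (G.spanning ↑S).p0 = G.cN S := p0_spanning _

lemma toSimpleGraph_eq_sg_univ : G.toSimpleGraph = G.sg Set.univ := by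
  ext v w
  constructor
  · rintro ⟨h, e, he⟩; exact ⟨h, e, Set.mem_univ e, he⟩
  · rintro ⟨h, e, _, he⟩; exact ⟨h, e, he⟩

lemma p0_eq_cN_univ : G.p0 = G.cN Finset.univ := by
  unfold p0 cN
  rw [toSimpleGraph_eq_sg_univ, Finset.coe_univ]

lemma toSimpleGraph_deleteEdge (e : G.E) :
    (G.deleteEdge e).toSimpleGraph = G.sg ↑(Finset.univ.erase e) := by
  ext v w
  constructor
  · rintro ⟨h, f, hf⟩
    exact ⟨h, f.1, by simp [f.2], hf⟩
  · rintro ⟨h, f, hfS, hf⟩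
    refine ⟨h, ⟨f, ?_⟩, hf⟩
    simpa using hfS

lemma p0_deleteEdge (e : G.E) : (G.deleteEdge e).p0 = G.cN (Finset.univ.erase e) := by
  unfold p0 cN
  rw [toSimpleGraph_deleteEdge]
  rfl

lemma sg_mono {S T : Set G.E} (h : S ⊆ T) : G.sg S ≤ G.sg T := by
  rintro a b ⟨hne, f, hf, he⟩
  exact ⟨hne, f, h hf, he⟩

lemma cN_mono {S T : Finset G.E} (h : S ⊆ T) : G.cN T ≤ G.cN S :=
  ncc_le_of_le (sg_mono (by exact_mod_cast h))

lemma sg_insert {e : G.E} (S : Finset G.E) {u v : G.V} (h : G.ends e = s(u, v)) :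
    G.sg ↑(insert e S) = G.sg ↑S ⊔ SimpleGraph.fromEdgeSet {s(u, v)} := by
  ext a b
  simp only [SimpleGraph.sup_adj, SimpleGraph.fromEdgeSet_adj, Set.mem_singleton_iff, sg_adj,
    Finset.coe_insert, Set.mem_insert_iff, Finset.mem_coe]
  constructor
  · rintro ⟨hne, f, (rfl | hfS), hfe⟩
    · exact Or.inr ⟨hfe.symm.trans h, hne⟩
    · exact Or.inl ⟨hne, f, hfS, hfe⟩
  · rintro (⟨hne, f, hfS, hfe⟩ | ⟨heq, hne⟩)
    · exact ⟨hne, f, Or.inr hfS, hfe⟩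
    · exact ⟨hne, e, Or.inl rfl, h.trans heq.symm⟩

lemma cN_insert_reach {e : G.E} {S : Finset G.E} {u v : G.V} (h : G.ends e = s(u, v))
    (hr : u = v ∨ (G.sg ↑S).Reachable u v) : G.cN (insert e S) = G.cN S := by
  unfold cN
  rw [sg_insert S h]
  exact ncc_sup_edge_eq hr

lemma cN_insert_not_reach {e : G.E} {S : Finset G.E} {u v : G.V} (h : G.ends e = s(u, v))
    (hne : u ≠ v) (hr : ¬ (G.sg ↑S).Reachable u v) :
    G.cN S = G.cN (insert e S) + 1 := by
  unfold cN
  rw [sg_insert S h]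
  exact ncc_sup_edge_add_one hne hr

lemma cN_insert_dichotomy (e : G.E) (S : Finset G.E) :
    G.cN (insert e S) = G.cN S ∨ G.cN S = G.cN (insert e S) + 1 := by
  obtain ⟨u, v, huv⟩ := Sym2.exists_eq_mk (G.ends e)
  by_cases hr : u = v ∨ (G.sg ↑S).Reachable u v
  · exact Or.inl (cN_insert_reach huv hr)
  · push_neg at hr
    exact Or.inr (cN_insert_not_reach huv hr.1 hr.2)

lemma cN_union_le (S U : Finset G.E) : G.cN S ≤ G.cN (S ∪ U) + U.card := by
  induction U using Finset.induction_on with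
  | empty => simpa using Nat.le_add_right _ 0
  | @insert a U ha ih =>
      rw [Finset.union_insert, Finset.card_insert_of_notMem ha]
      have h1 : G.cN (S ∪ U) ≤ G.cN (insert a (S ∪ U)) + 1 := by
        rcases cN_insert_dichotomy a (S ∪ U) with h | h <;> omega
      omega

lemma cN_le_of_subset {S T : Finset G.E} (h : S ⊆ T) :
    G.cN S ≤ G.cN T + (T \ S).card := by
  have := cN_union_le S (T \ S)
  rwa [Finset.union_sdiff_of_subset h] at this

lemma cN_empty : G.cN ∅ = G.numV := by
  unfold cN
  have : G.sg ↑(∅ : Finset G.E) = ⊥ := by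
    ext a b
    simp [sg_adj]
  rw [this, ncc_bot]
  rfl

lemma cN_le_numV (S : Finset G.E) : G.cN S ≤ G.numV := ncc_le_card _

lemma numV_le_cN_add_card (S : Finset G.E) : G.numV ≤ G.cN S + S.card := by
  have := cN_le_of_subset (Finset.empty_subset S)
  rw [cN_empty] at this
  simpa using this

lemma cN_eq_numV_iff (S : Finset G.E) :
    G.cN S = G.numV ↔ ∀ e ∈ S, G.IsLoop e := by
  constructor
  · intro h e heS
    by_contra hloop
    obtain ⟨u, v, huv⟩ := Sym2.exists_eq_mk (G.ends e)
    have hne : u ≠ v := by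
      rintro rfl
      exact hloop (by rw [IsLoop, huv]; exact Sym2.mk_isDiag_iff.mpr rfl)
    have hadj : (G.sg ↑S).Adj u v := ⟨hne, e, by simpa using heS, huv⟩
    exact absurd h (Nat.ne_of_lt (ncc_lt_of_adj hadj))
  · intro h
    have : G.sg ↑S = ⊥ := by
      ext a b
      simp only [sg_adj, SimpleGraph.bot_adj, iff_false, not_and]
      rintro hne ⟨f, hfS, hfe⟩
      have := h f (by simpa using hfS)
      rw [IsLoop, hfe, Sym2.mk_isDiag_iff] at this
      exact hne this
    rw [cN, this, ncc_bot]
    rfl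

lemma isIsthmus_iff (e : G.E) :
    G.IsIsthmus e ↔ G.cN (Finset.univ.erase e) = G.cN Finset.univ + 1 := by
  unfold IsIsthmus
  rw [p0_deleteEdge, p0_eq_cN_univ]
  have h := cN_insert_dichotomy e (Finset.univ.erase e)
  rw [Finset.insert_erase (Finset.mem_univ e)] at h
  rcases h with h | h <;> constructor <;> intro h' <;> omega

lemma not_isLoop_of_isIsthmus {e : G.E} (h : G.IsIsthmus e) : ¬ G.IsLoop e := by
  intro hl
  obtain ⟨u, v, huv⟩ := Sym2.exists_eq_mk (G.ends e)
  have huvd : u = v := by rwa [IsLoop, huv, Sym2.mk_isDiag_iff] at hl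
  have := cN_insert_reach (S := Finset.univ.erase e) huv (Or.inl huvd)
  rw [Finset.insert_erase (Finset.mem_univ e)] at this
  rw [isIsthmus_iff] at h
  omega

lemma cN_erase_of_isthmus {e : G.E} {S : Finset G.E} (hI : G.IsIsthmus e) (heS : e ∈ S) :
    G.cN (S.erase e) = G.cN S + 1 := by
  obtain ⟨u, v, huv⟩ := Sym2.exists_eq_mk (G.ends e)
  have hne : u ≠ v := by
    intro h
    exact not_isLoop_of_isIsthmus hI (by rw [IsLoop, huv, h]; exact Sym2.mk_isDiag_iff.mpr rfl)
  have hnru : ¬ (G.sg ↑(Finset.univ.erase e)).Reachable u v := by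
    intro hr
    have := cN_insert_reach (S := Finset.univ.erase e) huv (Or.inr hr)
    rw [Finset.insert_erase (Finset.mem_univ e)] at this
    rw [isIsthmus_iff] at hI
    omega
  have hnrS : ¬ (G.sg ↑(S.erase e)).Reachable u v := by
    intro hr
    exact hnru (hr.mono (sg_mono (by
      intro x hx
      simp only [Finset.coe_erase, Set.mem_diff, Set.mem_singleton_iff] at hx ⊢
      exact ⟨Finset.mem_coe.mpr (Finset.mem_univ _), hx.2⟩)))
  have := cN_insert_not_reach huv hne hnrS
  rwa [Finset.insert_erase heS] at this

end Multigraph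

namespace Multigraph
open Polynomial

variable {G : Multigraph}

lemma term_coeff (a b i j : ℕ) :
    ((Polynomial.C (Polynomial.X - 1 : Polynomial ℤ) ^ a *
      (Polynomial.X - Polynomial.C 1 : Polynomial (Polynomial ℤ)) ^ b).coeff j).coeff i
      = ((Polynomial.X - 1 : Polynomial ℤ) ^ a).coeff i *
        ((Polynomial.X - 1 : Polynomial ℤ) ^ b).coeff j := by
  have h1 : (Polynomial.X - Polynomial.C 1 : Polynomial (Polynomial ℤ))
      = Polynomial.map (Polynomial.C : ℤ →+* Polynomial ℤ) (Polynomial.X - 1 : Polynomial ℤ) := by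
    simp
  rw [h1, ← Polynomial.map_pow, ← map_pow, Polynomial.coeff_C_mul, Polynomial.coeff_map,
    Polynomial.coeff_mul_C]

lemma tutteCoeff_eq (G : Multigraph) (i j : ℕ) :
    G.tutteCoeff i j = ∑ S : Finset G.E,
      ((Polynomial.X - 1 : Polynomial ℤ) ^ (G.rank Set.univ - G.rank ↑S)).coeff i *
      ((Polynomial.X - 1 : Polynomial ℤ) ^ (S.card - G.rank ↑S)).coeff j := by
  unfold tutteCoeff tutte
  rw [Polynomial.finset_sum_coeff, Polynomial.finset_sum_coeff]
  exact Finset.sum_congr rfl fun S _ => term_coeff _ _ _ _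

lemma rank_coe (S : Finset G.E) : G.rank ↑S = G.numV - G.cN S := by
  rw [rank, p0_spanning_coe]

lemma rank_univ : G.rank Set.univ = G.numV - G.cN Finset.univ := by
  rw [← Finset.coe_univ, rank_coe]

lemma coeff_pow_eq_zero {a i : ℕ} (h : a < i) :
    ((Polynomial.X - 1 : Polynomial ℤ) ^ a).coeff i = 0 := by
  apply Polynomial.coeff_eq_zero_of_natDegree_lt
  have : (Polynomial.X - 1 : Polynomial ℤ) = Polynomial.X - Polynomial.C 1 := by simp
  rw [this, Polynomial.natDegree_pow, Polynomial.natDegree_X_sub_C]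
  omega

lemma coeff_pow_self (a : ℕ) : ((Polynomial.X - 1 : Polynomial ℤ) ^ a).coeff a = 1 := by
  have h : (Polynomial.X - 1 : Polynomial ℤ) = Polynomial.X - Polynomial.C 1 := by simp
  have hm : ((Polynomial.X - 1 : Polynomial ℤ) ^ a).Monic := by
    rw [h]; exact (Polynomial.monic_X_sub_C _).pow _
  have hd : ((Polynomial.X - 1 : Polynomial ℤ) ^ a).natDegree = a := by
    rw [h, Polynomial.natDegree_pow, Polynomial.natDegree_X_sub_C, mul_one]
  have := hm.coeff_natDegree
  rwa [hd] at this

lemma powerset_sum_coeff (L : Finset G.E) (k : ℕ) :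
    ∑ S ∈ L.powerset, ((Polynomial.X - 1 : Polynomial ℤ) ^ S.card).coeff k
      = if k = L.card then 1 else 0 := by
  rw [← Polynomial.finset_sum_coeff]
  have hsum : (∑ S ∈ L.powerset, ((Polynomial.X - 1 : Polynomial ℤ)) ^ S.card)
      = Polynomial.X ^ L.card := by
    have h := Finset.prod_add (fun _ : G.E => (Polynomial.X - 1 : Polynomial ℤ))
      (fun _ => 1) L
    simp only [Finset.prod_const, one_pow, mul_one, sub_add_cancel] at h
    rw [← h]
  rw [hsum, Polynomial.coeff_X_pow]

end Multigraph

namespace Multigraph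

variable {G : Multigraph}

lemma cN_sdiff_of_isthmus (h1 : G.cN Finset.univ = 1) :
    ∀ T : Finset G.E, (∀ e ∈ T, G.IsIsthmus e) → G.cN (Finset.univ \ T) = 1 + T.card := by
  intro T
  induction T using Finset.induction_on with
  | empty => intro _; simpa using h1
  | @insert a T ha ih =>
      intro hall
      rw [Finset.sdiff_insert]
      have haI : G.IsIsthmus a := hall a (Finset.mem_insert_self _ _)
      have hmem : a ∈ Finset.univ \ T := Finset.mem_sdiff.mpr ⟨Finset.mem_univ _, ha⟩
      rw [cN_erase_of_isthmus haI hmem, ih (fun e he => hall e (Finset.mem_insert_of_mem he)),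
        Finset.card_insert_of_notMem ha]
      omega


end Multigraph
end

namespace Multigraph

/-- For a connected graph `G` with `p` loops, `s` isthmuses, cyclomatic number
`p1(G)` and `d(G) = |V(G)| - 1`: `v_{d,p} = 1` with `v_{i,j} = 0` for `i > d`,
and `v_{s,p1} = 1` with `v_{i,j} = 0` for `j > p1`. -/
theorem tutteCoeff_extreme_coefficients (G : Multigraph) (hG : G.Connected) :
    (G.tutteCoeff (G.numV - 1) (Nat.card {e : G.E // G.IsLoop e}) = 1 ∧
      ∀ i j : ℕ, G.numV - 1 < i → G.tutteCoeff i j = 0) ∧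
    (G.tutteCoeff (Nat.card {e : G.E // G.IsIsthmus e}) G.p1 = 1 ∧
      ∀ i j : ℕ, G.p1 < j → G.tutteCoeff i j = 0) := by
  classical
  have h1 : G.cN Finset.univ = 1 := by rw [← p0_eq_cN_univ]; exact hG
  have hcu : (Finset.univ : Finset G.E).card = G.numE := Finset.card_univ
  have hle : ∀ S : Finset G.E, G.cN S ≤ G.numV := cN_le_numV
  have hn1 : 1 ≤ G.numV := h1 ▸ hle Finset.univ
  haveI : Nonempty G.V := Fintype.card_pos_iff.mp hn1
  have hpos : ∀ S : Finset G.E, 1 ≤ G.cN S := fun S => ncc_pos _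
  have hSm : ∀ S : Finset G.E, S.card ≤ G.numE :=
    fun S => hcu ▸ Finset.card_le_card (Finset.subset_univ S)
  have hsd : ∀ S : Finset G.E, (Finset.univ \ S).card = G.numE - S.card := by
    intro S
    rw [Finset.card_sdiff_of_subset (Finset.subset_univ S), hcu]
  have hbd : ∀ S : Finset G.E, G.cN S ≤ 1 + (Finset.univ \ S).card := by
    intro S
    have h := cN_le_of_subset (Finset.subset_univ S)
    rw [h1] at h
    exact h
  have hnV : ∀ S : Finset G.E, G.numV ≤ G.cN S + S.card := numV_le_cN_add_card
  have hrku : G.rank Set.univ = G.numV - 1 := by rw [rank_univ, h1]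
  have hp1 : G.p1 = G.numE + 1 - G.numV := by unfold p1; rw [hG]
  refine ⟨⟨?_, ?_⟩, ?_, ?_⟩
  · -- v_{d,p} = 1
    have hLcard : Nat.card {e : G.E // G.IsLoop e}
        = (Finset.univ.filter (fun e => G.IsLoop e)).card := by
      rw [Nat.card_eq_fintype_card, Fintype.card_subtype]
    rw [tutteCoeff_eq, hLcard]
    have h0 : ∀ S ∈ (Finset.univ : Finset (Finset G.E)),
        S ∉ (Finset.univ.filter (fun e => G.IsLoop e)).powerset →
        ((Polynomial.X - 1 : Polynomial ℤ) ^ (G.rank Set.univ - G.rank ↑S)).coeff (G.numV - 1) *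
        ((Polynomial.X - 1 : Polynomial ℤ) ^ (S.card - G.rank ↑S)).coeff
          ((Finset.univ.filter (fun e => G.IsLoop e)).card) = 0 := by
      intro S _ hS
      have hnl : ¬ ∀ e ∈ S, G.IsLoop e := by
        intro hall
        exact hS (Finset.mem_powerset.mpr
          (fun e he => Finset.mem_filter.mpr ⟨Finset.mem_univ _, hall e he⟩))
      have hcn : G.cN S ≠ G.numV := fun hcn => hnl ((cN_eq_numV_iff S).mp hcn)
      have hc1 := hpos S
      have hc2 := hle S
      rw [hrku, rank_coe, coeff_pow_eq_zero (by omega), zero_mul]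
    rw [← Finset.sum_subset (Finset.subset_univ _) h0]
    have hcong : ∀ S ∈ (Finset.univ.filter (fun e => G.IsLoop e)).powerset,
        ((Polynomial.X - 1 : Polynomial ℤ) ^ (G.rank Set.univ - G.rank ↑S)).coeff (G.numV - 1) *
        ((Polynomial.X - 1 : Polynomial ℤ) ^ (S.card - G.rank ↑S)).coeff
          ((Finset.univ.filter (fun e => G.IsLoop e)).card)
        = ((Polynomial.X - 1 : Polynomial ℤ) ^ S.card).coeff
            ((Finset.univ.filter (fun e => G.IsLoop e)).card) := by
      intro S hS
      have hall : ∀ e ∈ S, G.IsLoop e := fun e he =>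
        (Finset.mem_filter.mp (Finset.mem_powerset.mp hS he)).2
      have hcn : G.cN S = G.numV := (cN_eq_numV_iff S).mpr hall
      have e1 : G.rank Set.univ - G.rank ↑S = G.numV - 1 := by
        rw [hrku, rank_coe, hcn]; omega
      have e2 : S.card - G.rank ↑S = S.card := by
        rw [rank_coe, hcn]; omega
      rw [e1, e2, coeff_pow_self, one_mul]
    rw [Finset.sum_congr rfl hcong, powerset_sum_coeff, if_pos rfl]
  · -- vanishing for i > d
    intro i j hi
    rw [tutteCoeff_eq]
    refine Finset.sum_eq_zero fun S _ => ?_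
    have : G.rank Set.univ - G.rank ↑S < i := by
      have := Nat.sub_le (G.rank Set.univ) (G.rank ↑S)
      omega
    rw [coeff_pow_eq_zero this, zero_mul]
  · -- v_{s,p1} = 1
    have hIcard : Nat.card {e : G.E // G.IsIsthmus e}
        = (Finset.univ.filter (fun e => G.IsIsthmus e)).card := by
      rw [Nat.card_eq_fintype_card, Fintype.card_subtype]
    have hnotI : ∀ e : G.E, ¬ G.IsIsthmus e → G.cN (Finset.univ.erase e) = 1 := by
      intro e he
      have hd := cN_insert_dichotomy e (Finset.univ.erase e)
      rw [Finset.insert_erase (Finset.mem_univ e)] at hd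
      rw [isIsthmus_iff] at he
      omega
    have hclass : ∀ S : Finset G.E,
        (Finset.univ \ S ⊆ Finset.univ.filter (fun e => G.IsIsthmus e)) ↔
          G.cN S = 1 + (Finset.univ \ S).card := by
      intro S
      constructor
      · intro h
        have := cN_sdiff_of_isthmus h1 (Finset.univ \ S)
          (fun e he => (Finset.mem_filter.mp (h he)).2)
        rwa [Finset.sdiff_sdiff_self_left, Finset.univ_inter] at this
      · intro hcs e he
        refine Finset.mem_filter.mpr ⟨Finset.mem_univ _, ?_⟩
        by_contra hni
        have h2 := hnotI e hni
        obtain ⟨_, heS⟩ := Finset.mem_sdiff.mp he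
        have hsub : S ⊆ Finset.univ.erase e :=
          Finset.subset_erase.mpr ⟨Finset.subset_univ S, heS⟩
        have h3 := cN_le_of_subset hsub
        rw [h2, Finset.erase_sdiff_comm, Finset.card_erase_of_mem he] at h3
        have ht1 : 1 ≤ (Finset.univ \ S).card := Finset.card_pos.mpr ⟨e, he⟩
        omega
    have hmemD : ∀ S : Finset G.E,
        S ∈ (Finset.univ.filter (fun e => G.IsIsthmus e)).powerset.image
          (fun T => Finset.univ \ T)
        ↔ Finset.univ \ S ⊆ Finset.univ.filter (fun e => G.IsIsthmus e) := by
      intro S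
      simp only [Finset.mem_image, Finset.mem_powerset]
      constructor
      · rintro ⟨T, hT, rfl⟩
        rwa [Finset.sdiff_sdiff_self_left, Finset.univ_inter]
      · intro h
        exact ⟨Finset.univ \ S, h, by rw [Finset.sdiff_sdiff_self_left, Finset.univ_inter]⟩
    rw [tutteCoeff_eq, hIcard]
    have h0 : ∀ S ∈ (Finset.univ : Finset (Finset G.E)),
        S ∉ (Finset.univ.filter (fun e => G.IsIsthmus e)).powerset.image
          (fun T => Finset.univ \ T) →
        ((Polynomial.X - 1 : Polynomial ℤ) ^ (G.rank Set.univ - G.rank ↑S)).coeff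
          ((Finset.univ.filter (fun e => G.IsIsthmus e)).card) *
        ((Polynomial.X - 1 : Polynomial ℤ) ^ (S.card - G.rank ↑S)).coeff G.p1 = 0 := by
      intro S _ hS
      rw [hmemD, hclass] at hS
      have hb := hbd S
      have hc1 := hpos S
      have hc2 := hle S
      have hs1 := hsd S
      have hs2 := hSm S
      have hv := hnV S
      apply mul_eq_zero_of_right
      rw [rank_coe]
      exact coeff_pow_eq_zero (by omega)
    rw [← Finset.sum_subset (Finset.subset_univ _) h0]
    have hcong : ∀ S ∈ (Finset.univ.filter (fun e => G.IsIsthmus e)).powerset.image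
          (fun T => Finset.univ \ T),
        ((Polynomial.X - 1 : Polynomial ℤ) ^ (G.rank Set.univ - G.rank ↑S)).coeff
          ((Finset.univ.filter (fun e => G.IsIsthmus e)).card) *
        ((Polynomial.X - 1 : Polynomial ℤ) ^ (S.card - G.rank ↑S)).coeff G.p1
        = ((Polynomial.X - 1 : Polynomial ℤ) ^ ((Finset.univ \ S).card)).coeff
            ((Finset.univ.filter (fun e => G.IsIsthmus e)).card) := by
      intro S hS
      rw [hmemD, hclass] at hS
      have hc2 := hle S
      have hs1 := hsd S
      have hs2 := hSm S
      have hv := hnV S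
      have e1 : G.rank Set.univ - G.rank ↑S = (Finset.univ \ S).card := by
        rw [hrku, rank_coe, hS]; omega
      have e2 : S.card - G.rank ↑S = G.p1 := by
        rw [rank_coe, hS, hp1]; omega
      rw [e1, e2, coeff_pow_self, mul_one]
    rw [Finset.sum_congr rfl hcong]
    rw [Finset.sum_image (by
      intro T1 h1' T2 h2' heq
      have := congrArg (fun U => Finset.univ \ U) heq
      simpa [Finset.sdiff_sdiff_self_left, Finset.univ_inter] using this)]
    have hcong2 : ∀ T ∈ (Finset.univ.filter (fun e => G.IsIsthmus e)).powerset,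
        ((Polynomial.X - 1 : Polynomial ℤ) ^ ((Finset.univ \ (Finset.univ \ T)).card)).coeff
            ((Finset.univ.filter (fun e => G.IsIsthmus e)).card)
        = ((Polynomial.X - 1 : Polynomial ℤ) ^ (T.card)).coeff
            ((Finset.univ.filter (fun e => G.IsIsthmus e)).card) := by
      intro T _
      rw [Finset.sdiff_sdiff_self_left, Finset.univ_inter]
    rw [Finset.sum_congr rfl hcong2, powerset_sum_coeff, if_pos rfl]
  · -- vanishing for j > p1
    intro i j hj
    rw [tutteCoeff_eq]
    refine Finset.sum_eq_zero fun S _ => ?_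
    have hb := hbd S
    have hc1 := hpos S
    have hc2 := hle S
    have hs1 := hsd S
    have hs2 := hSm S
    have hv := hnV S
    apply mul_eq_zero_of_right
    rw [rank_coe]
    exact coeff_pow_eq_zero (by omega)


end Multigraph
end
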